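/- If a CMAEL(CD)-formula θ is satisfiable in a pseudo-CMAEM, then θ is satisfiable in a CMAEM. -/

import Mathlib

set_option autoImplicit false

/-- A coalition is a nonempty finite set of agents. -/
abbrev Coalition (Agent : Type) : Type := {A : Finset Agent // A.Nonempty}

/-- Formulas of the logic CMAEL(CD). -/
inductive Formula (Agent AP : Type) : Type where
  | atom : AP → Formula Agent AP
  | neg  : Formula Agent AP → Formula Agent AP
  | conj : Formula Agent AP → Formula Agent AP → Formula Agent AP
  | D    : Coalition Agent → Formula Agent AP → Formula Agent AP
  | C    : Coalition Agent → Formula Agent AP → Formula Agent AP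

/-- The singleton coalition `{a}`. -/
def single {Agent : Type} (a : Agent) : Coalition Agent :=
  ⟨{a}, Finset.singleton_nonempty a⟩

/-- A coalitional multiagent epistemic pseudo-model (pseudo-CMAEM):
each `RD A` is an equivalence relation, and `RD A ⊆ RD B` whenever `B ⊆ A`. -/
structure PseudoCMAEM (Agent AP : Type) where
  State : Type
  nonempty : Nonempty State
  RD : Coalition Agent → State → State → Prop
  equiv : ∀ A, Equivalence (RD A)
  mono : ∀ (A B : Coalition Agent), B.1 ⊆ A.1 → ∀ s t, RD A s t → RD B s t
  label : State → Set AP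

namespace PseudoCMAEM

variable {Agent AP : Type}

/-- `RC A` is the reflexive-transitive closure of `⋃_{∅ ≠ B ⊆ A} RD B`. -/
def RC (M : PseudoCMAEM Agent AP) (A : Coalition Agent) : M.State → M.State → Prop :=
  Relation.ReflTransGen (fun s t => ∃ B : Coalition Agent, B.1 ⊆ A.1 ∧ M.RD B s t)

/-- Truth at a state (standard Kripke clauses). -/
def sat (M : PseudoCMAEM Agent AP) : M.State → Formula Agent AP → Prop
  | s, .atom p => p ∈ M.label s
  | s, .neg φ => ¬ sat M s φ
  | s, .conj φ ψ => sat M s φ ∧ sat M s ψ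
  | s, .D A φ => ∀ t, M.RD A s t → sat M t φ
  | s, .C A φ => ∀ t, M.RC A s t → sat M t φ

/-- `t` is `A`-reachable from `s`: `s = t` or a finite chain of single-agent `RD` steps
with agents from `A`. -/
def AReach (M : PseudoCMAEM Agent AP) (A : Coalition Agent) : M.State → M.State → Prop :=
  Relation.ReflTransGen (fun s t => ∃ a ∈ A.1, M.RD (single a) s t)

end PseudoCMAEM

/-- A coalitional multiagent epistemic model (CMAEM): additionally
`RD A = ⋂_{a ∈ A} RD {a}`. -/
structure CMAEM (Agent AP : Type) extends PseudoCMAEM Agent AP where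
  inter : ∀ (A : Coalition Agent) (s t : State), RD A s t ↔ ∀ a ∈ A.1, RD (single a) s t

namespace CMAEM

variable {Agent AP : Type}

abbrev sat (M : CMAEM Agent AP) : M.State → Formula Agent AP → Prop :=
  M.toPseudoCMAEM.sat

abbrev RC (M : CMAEM Agent AP) : Coalition Agent → M.State → M.State → Prop :=
  M.toPseudoCMAEM.RC

end CMAEM

/-- `AlphaComp χ ψ` : `ψ` is an α-component of the α-formula `χ`. -/
inductive AlphaComp {Agent AP : Type} : Formula Agent AP → Formula Agent AP → Prop where
  | negneg (φ : Formula Agent AP) : AlphaComp (.neg (.neg φ)) φ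
  | conjL (φ ψ : Formula Agent AP) : AlphaComp (.conj φ ψ) φ
  | conjR (φ ψ : Formula Agent AP) : AlphaComp (.conj φ ψ) ψ
  | dSelf (A : Coalition Agent) (φ : Formula Agent AP) : AlphaComp (.D A φ) (.D A φ)
  | dComp (A : Coalition Agent) (φ : Formula Agent AP) : AlphaComp (.D A φ) φ
  | cComp (A : Coalition Agent) (φ : Formula Agent AP) : AlphaComp (.C A φ) φ
  | cD (A : Coalition Agent) (φ : Formula Agent AP) {a : Agent} (ha : a ∈ A.1) :
      AlphaComp (.C A φ) (.D (single a) (.C A φ))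

/-- α-formulas: `¬¬φ`, `φ∧ψ`, `D_A φ`, `C_A φ`. -/
def IsAlpha {Agent AP : Type} : Formula Agent AP → Prop
  | .neg (.neg _) => True
  | .conj _ _ => True
  | .D _ _ => True
  | .C _ _ => True
  | _ => False

/-- `BetaComp χ ψ` : `ψ` is a β-component of the β-formula `χ`. -/
inductive BetaComp {Agent AP : Type} : Formula Agent AP → Formula Agent AP → Prop where
  | nconjL (φ ψ : Formula Agent AP) : BetaComp (.neg (.conj φ ψ)) (.neg φ)
  | nconjR (φ ψ : Formula Agent AP) : BetaComp (.neg (.conj φ ψ)) (.neg ψ)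
  | ncComp (A : Coalition Agent) (φ : Formula Agent AP) : BetaComp (.neg (.C A φ)) (.neg φ)
  | ncD (A : Coalition Agent) (φ : Formula Agent AP) {a : Agent} (ha : a ∈ A.1) :
      BetaComp (.neg (.C A φ)) (.neg (.D (single a) (.C A φ)))

/-- β-formulas: `¬(φ∧ψ)`, `¬C_A φ`. -/
def IsBeta {Agent AP : Type} : Formula Agent AP → Prop
  | .neg (.conj _ _) => True
  | .neg (.C _ _) => True
  | _ => False

section SetsOfFormulas

variable {Agent AP : Type}

/-- A set of formulas is patently inconsistent if it contains a pair `φ`, `¬φ`. -/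
def PatInc (Δ : Set (Formula Agent AP)) : Prop := ∃ φ, φ ∈ Δ ∧ Formula.neg φ ∈ Δ

/-- Fully expanded set of formulas. -/
def FullyExpandedSet (Δ : Set (Formula Agent AP)) : Prop :=
  ¬ PatInc Δ ∧
  (∀ χ ∈ Δ, ∀ ψ, AlphaComp χ ψ → ψ ∈ Δ) ∧
  (∀ χ ∈ Δ, IsBeta χ → ∃ ψ, BetaComp χ ψ ∧ ψ ∈ Δ)

/-- The subformulas of a formula. -/
def subf : Formula Agent AP → Set (Formula Agent AP)
  | .atom p => {Formula.atom p}
  | .neg φ => insert (Formula.neg φ) (subf φ)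
  | .conj φ ψ => insert (Formula.conj φ ψ) (subf φ ∪ subf ψ)
  | .D A φ => insert (Formula.D A φ) (subf φ)
  | .C A φ => insert (Formula.C A φ) (subf φ)

end SetsOfFormulas

section Expansion

variable {Agent AP : Type}

/-- One set-replacement step of the procedure `FullExpansion`, acting on a family of sets
of formulas; patently inconsistent sets are discarded immediately. -/
inductive FEStep : Set (Set (Formula Agent AP)) → Set (Set (Formula Agent AP)) → Prop where
  | alpha {F : Set (Set (Formula Agent AP))} {Φ : Set (Formula Agent AP)}
      {χ : Formula Agent AP} (hΦ : Φ ∈ F) (hχ : χ ∈ Φ) (hα : IsAlpha χ) :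
      FEStep F ((F \ {Φ}) ∪ {Δ | Δ = Φ ∪ {ψ | AlphaComp χ ψ} ∧ ¬ PatInc Δ})
  | beta {F : Set (Set (Formula Agent AP))} {Φ : Set (Formula Agent AP)}
      {χ : Formula Agent AP} (hΦ : Φ ∈ F) (hχ : χ ∈ Φ) (hβ : IsBeta χ)
      (hnone : ∀ ψ, BetaComp χ ψ → ψ ∉ Φ) :
      FEStep F ((F \ {Φ}) ∪ {Δ | (∃ ψ, BetaComp χ ψ ∧ Δ = insert ψ Φ) ∧ ¬ PatInc Δ})
  | ev {F : Set (Set (Formula Agent AP))} {Φ : Set (Formula Agent AP)}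
      {A : Coalition Agent} {φ : Formula Agent AP}
      (hΦ : Φ ∈ F) (hχ : Formula.neg (.C A φ) ∈ Φ) (hnφ : Formula.neg φ ∉ Φ)
      (hother : ∃ ψ, BetaComp (Formula.neg (.C A φ)) ψ ∧ ψ ≠ Formula.neg φ ∧ ψ ∈ Φ) :
      FEStep F (F ∪ {Δ | Δ = insert (Formula.neg φ) Φ ∧ ¬ PatInc Δ})

/-- The starting family of the expansion procedure: `{Γ}`, unless `Γ` is
patently inconsistent, in which case the empty family. -/
def feInit (Γ : Set (Formula Agent AP)) : Set (Set (Formula Agent AP)) :=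
  {Δ | Δ = Γ ∧ ¬ PatInc Γ}

/-- Type of restrictive cut conditions: a condition on the cut formula, the host formula
it is a subformula of, and the current set. -/
abbrev CutCond (Agent AP : Type) : Type :=
  Formula Agent AP → Formula Agent AP → Set (Formula Agent AP) → Prop

/-- One step of the cut-saturated-expansion procedure: a `FEStep`, or a cut on a
subformula `D_A φ` (resp. `C_A φ`) of a member formula, when `C1` (resp. `C2`) holds. -/
inductive CSEStep (C1 C2 : CutCond Agent AP) :
    Set (Set (Formula Agent AP)) → Set (Set (Formula Agent AP)) → Prop where
  | fe {F F' : Set (Set (Formula Agent AP))} : FEStep F F' → CSEStep C1 C2 F F'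
  | cutD {F : Set (Set (Formula Agent AP))} {Φ : Set (Formula Agent AP)}
      {ψ : Formula Agent AP} {A : Coalition Agent} {φ : Formula Agent AP}
      (hΦ : Φ ∈ F) (hψ : ψ ∈ Φ) (hsub : Formula.D A φ ∈ subf ψ)
      (hc : C1 (Formula.D A φ) ψ Φ) :
      CSEStep C1 C2 F ((F \ {Φ}) ∪
        {Δ | (Δ = insert (Formula.D A φ) Φ ∨ Δ = insert (Formula.neg (Formula.D A φ)) Φ) ∧
              ¬ PatInc Δ})
  | cutC {F : Set (Set (Formula Agent AP))} {Φ : Set (Formula Agent AP)}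
      {ψ : Formula Agent AP} {A : Coalition Agent} {φ : Formula Agent AP}
      (hΦ : Φ ∈ F) (hψ : ψ ∈ Φ) (hsub : Formula.C A φ ∈ subf ψ)
      (hc : C2 (Formula.C A φ) ψ Φ) :
      CSEStep C1 C2 F ((F \ {Φ}) ∪
        {Δ | (Δ = insert (Formula.C A φ) Φ ∨ Δ = insert (Formula.neg (Formula.C A φ)) Φ) ∧
              ¬ PatInc Δ})

/-- The cut-saturated expansions of `Γ`: members of a family reachable from `{Γ}` by
`CSEStep`s on which no `CSEStep` has any further effect (saturation). -/
def CSE (C1 C2 : CutCond Agent AP) (Γ : Set (Formula Agent AP)) :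
    Set (Set (Formula Agent AP)) :=
  {Δ | ∃ F, Relation.ReflTransGen (CSEStep C1 C2) (feInit Γ) F ∧
        (∀ F', CSEStep C1 C2 F F' → F' = F) ∧ Δ ∈ F}

end Expansion

section Hintikka

variable {Agent AP : Type}

/-- The relation `R^C_A` determined by a family of relations `RD`. -/
def RCof {State : Type} (RD : Coalition Agent → State → State → Prop)
    (A : Coalition Agent) : State → State → Prop :=
  Relation.ReflTransGen (fun s t => ∃ B : Coalition Agent, B.1 ⊆ A.1 ∧ RD B s t)

end Hintikka

/-- A coalitional multiagent epistemic Hintikka structure (CMAEHS). -/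
structure CMAEHS (Agent AP : Type) where
  State : Type
  nonempty : Nonempty State
  RD : Coalition Agent → State → State → Prop
  H : State → Set (Formula Agent AP)
  ch1 : ∀ s, FullyExpandedSet (H s)
  ch2 : ∀ s (A : Coalition Agent) (φ : Formula Agent AP),
      Formula.neg (.D A φ) ∈ H s → ∃ t, RD A s t ∧ Formula.neg φ ∈ H t
  ch3 : ∀ s s' (A : Coalition Agent), RD A s s' →
      ∀ (B : Coalition Agent), B.1 ⊆ A.1 →
      ∀ φ : Formula Agent AP, (Formula.D B φ ∈ H s ↔ Formula.D B φ ∈ H s')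
  ch4 : ∀ s (A : Coalition Agent) (φ : Formula Agent AP),
      Formula.neg (.C A φ) ∈ H s → ∃ t, RCof RD A s t ∧ Formula.neg φ ∈ H t

section Tableau

variable {Agent AP : Type}

/-- The prestate created by rule `DR` from a state `Δ` and a formula `¬D_A φ ∈ Δ`. -/
def DRset (A : Coalition Agent) (φ : Formula Agent AP) (Δ : Set (Formula Agent AP)) :
    Set (Formula Agent AP) :=
  ({Formula.neg φ} : Set (Formula Agent AP)) ∪
  {χ ∈ Δ | ∃ (A' : Coalition Agent) (ψ : Formula Agent AP),
      χ = Formula.D A' ψ ∧ A'.1 ⊆ A.1} ∪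
  {χ ∈ Δ | ∃ (A' : Coalition Agent) (ψ : Formula Agent AP),
      χ = Formula.neg (Formula.D A' ψ) ∧ A'.1 ⊆ A.1 ∧
      χ ≠ Formula.neg (Formula.D A φ)} ∪
  {χ ∈ Δ | ∃ (A' : Coalition Agent) (ψ : Formula Agent AP),
      χ = Formula.neg (Formula.C A' ψ) ∧ ∃ a, a ∈ A'.1 ∧ a ∈ A.1}

mutual
  /-- The prestates of the pretableau for input formula `θ`. -/
  inductive IsPrestate (C1 C2 : CutCond Agent AP) (θ : Formula Agent AP) :
      Set (Formula Agent AP) → Prop where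
    | init : IsPrestate C1 C2 θ {θ}
    | dr {Δ : Set (Formula Agent AP)} {A : Coalition Agent} {φ : Formula Agent AP} :
        IsState C1 C2 θ Δ → Formula.neg (.D A φ) ∈ Δ →
        IsPrestate C1 C2 θ (DRset A φ Δ)

  /-- The states of the pretableau for input formula `θ` (rule `SR`). -/
  inductive IsState (C1 C2 : CutCond Agent AP) (θ : Formula Agent AP) :
      Set (Formula Agent AP) → Prop where
    | sr {Γ Δ : Set (Formula Agent AP)} :
        IsPrestate C1 C2 θ Γ → Δ ∈ CSE C1 C2 Γ → IsState C1 C2 θ Δ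
end

/-- The arrow `Δ →^{¬D_A φ} Δ'` of the initial tableau `T_0^θ`
(obtained from `Δ →^{¬D_A φ} Γ ⇢ Δ'` by prestate elimination). -/
def InitArrow (C1 C2 : CutCond Agent AP) (θ : Formula Agent AP)
    (Δ : Set (Formula Agent AP)) (A : Coalition Agent) (φ : Formula Agent AP)
    (Δ' : Set (Formula Agent AP)) : Prop :=
  IsState C1 C2 θ Δ ∧ Formula.neg (.D A φ) ∈ Δ ∧ Δ' ∈ CSE C1 C2 (DRset A φ Δ)

/-- A path realizing the eventuality `¬C_A φ` at a state, within the set `S` of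
(surviving) states, all of whose nodes satisfy the predicate `P`. -/
inductive RealizePath (C1 C2 : CutCond Agent AP) (θ : Formula Agent AP)
    (S : Set (Set (Formula Agent AP))) (P : Set (Formula Agent AP) → Prop)
    (A : Coalition Agent) (φ : Formula Agent AP) : Set (Formula Agent AP) → Prop where
  | base {Δ : Set (Formula Agent AP)} (hS : Δ ∈ S) (hP : P Δ)
      (h : Formula.neg φ ∈ Δ) : RealizePath C1 C2 θ S P A φ Δ
  | step {Δ Δ' : Set (Formula Agent AP)} (hS : Δ ∈ S) (hP : P Δ)
      (hev : Formula.neg (.C A φ) ∈ Δ) {a : Agent} (ha : a ∈ A.1)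
      {ψ : Formula Agent AP} (harr : InitArrow C1 C2 θ Δ (single a) ψ Δ')
      (h : RealizePath C1 C2 θ S P A φ Δ') : RealizePath C1 C2 θ S P A φ Δ

/-- One state-elimination step (rule `E1` or rule `E2`). -/
inductive ElimStep (C1 C2 : CutCond Agent AP) (θ : Formula Agent AP) :
    Set (Set (Formula Agent AP)) → Set (Set (Formula Agent AP)) → Prop where
  | e1 {S : Set (Set (Formula Agent AP))} {Δ : Set (Formula Agent AP)}
      {A : Coalition Agent} {φ : Formula Agent AP}
      (hΔ : Δ ∈ S) (hin : Formula.neg (.D A φ) ∈ Δ)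
      (hno : ∀ Δ' ∈ S, ¬ InitArrow C1 C2 θ Δ A φ Δ') :
      ElimStep C1 C2 θ S (S \ {Δ})
  | e2 {S : Set (Set (Formula Agent AP))} {Δ : Set (Formula Agent AP)}
      {A : Coalition Agent} {φ : Formula Agent AP}
      (hΔ : Δ ∈ S) (hin : Formula.neg (.C A φ) ∈ Δ)
      (hno : ¬ RealizePath C1 C2 θ S (fun _ => True) A φ Δ) :
      ElimStep C1 C2 θ S (S \ {Δ})

/-- `S` is the set of states of the final tableau `T^θ`: obtained from the states of the
initial tableau `T_0^θ` by state-elimination steps, with no further step applicable. -/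
def FinalTableau (C1 C2 : CutCond Agent AP) (θ : Formula Agent AP)
    (S : Set (Set (Formula Agent AP))) : Prop :=
  Relation.ReflTransGen (ElimStep C1 C2 θ) {Δ | IsState C1 C2 θ Δ} S ∧
  ∀ S', ¬ ElimStep C1 C2 θ S S'

/-- A set of formulas satisfiable (at a single state) in some CMAEM. -/
def SatSet (Δ : Set (Formula Agent AP)) : Prop :=
  ∃ (M : CMAEM Agent AP) (s : M.State), ∀ χ ∈ Δ, M.sat s χ

/-- The specific restrictive condition (C1) for cuts on `D_A φ`. -/
def specC1 : CutCond Agent AP := fun χ ψ Δ =>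
  ∃ (A : Coalition Agent) (φ : Formula Agent AP), χ = Formula.D A φ ∧
    ((∃ (B : Coalition Agent) (δ : Formula Agent AP),
        (ψ = Formula.D B δ ∨ ψ = Formula.neg (Formula.D B δ)) ∧
        ∃ (E : Coalition Agent) (ε : Formula Agent AP),
          Formula.neg (Formula.D E ε) ∈ Δ ∧ A.1 ⊆ E.1 ∧ B.1 ⊆ E.1) ∨
     (∃ (B : Coalition Agent) (δ : Formula Agent AP),
        ψ = Formula.neg (Formula.C B δ) ∧
        ∃ (E : Coalition Agent) (ε : Formula Agent AP),
          Formula.neg (Formula.D E ε) ∈ Δ ∧ A.1 ⊆ E.1 ∧ ∃ a, a ∈ B.1 ∧ a ∈ E.1))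

/-- The specific restrictive condition (C2) for cuts on `C_A φ`. -/
def specC2 : CutCond Agent AP := fun χ ψ Δ =>
  ∃ (A : Coalition Agent) (φ : Formula Agent AP), χ = Formula.C A φ ∧
    ((∃ (B : Coalition Agent) (δ : Formula Agent AP),
        (ψ = Formula.D B δ ∨ ψ = Formula.neg (Formula.D B δ)) ∧
        ∃ (E : Coalition Agent) (ε : Formula Agent AP),
          Formula.neg (Formula.D E ε) ∈ Δ ∧ B.1 ⊆ E.1 ∧ ∃ a, a ∈ A.1 ∧ a ∈ E.1) ∨
     (∃ (B : Coalition Agent) (δ : Formula Agent AP),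
        ψ = Formula.neg (Formula.C B δ) ∧
        ∃ (E : Coalition Agent) (ε : Formula Agent AP),
          Formula.neg (Formula.D E ε) ∈ Δ ∧ (∃ a, a ∈ A.1 ∧ a ∈ E.1) ∧
          ∃ a, a ∈ B.1 ∧ a ∈ E.1))

end Tableau

section Closure

variable {Agent AP : Type}

/-- The closure `cl(θ)`: smallest set containing `θ`, closed under α- and β-components,
and containing `¬ψ` whenever `¬D_A ψ` is in it. -/
inductive Closure (θ : Formula Agent AP) : Formula Agent AP → Prop where
  | base : Closure θ θ
  | alpha {χ ψ : Formula Agent AP} : Closure θ χ → AlphaComp χ ψ → Closure θ ψ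
  | beta {χ ψ : Formula Agent AP} : Closure θ χ → BetaComp χ ψ → Closure θ ψ
  | negD {A : Coalition Agent} {ψ : Formula Agent AP} :
      Closure θ (Formula.neg (.D A ψ)) → Closure θ (Formula.neg ψ)

/-- The extended closure `ecl(θ)`: smallest set containing `χ` and `¬χ`
for every `χ ∈ cl(θ)`. -/
def ecl (θ : Formula Agent AP) : Set (Formula Agent AP) :=
  {φ | ∃ χ, Closure θ χ ∧ (φ = χ ∨ φ = Formula.neg χ)}

/-- The length of a formula. -/
def Formula.length : Formula Agent AP → ℕ
  | .atom _ => 1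
  | .neg φ => φ.length + 1
  | .conj φ ψ => φ.length + ψ.length + 1
  | .D _ φ => φ.length + 1
  | .C _ φ => φ.length + 1

/-- The agents occurring in a formula. -/
def Formula.agents [DecidableEq Agent] : Formula Agent AP → Finset Agent
  | .atom _ => ∅
  | .neg φ => φ.agents
  | .conj φ ψ => φ.agents ∪ ψ.agents
  | .D A φ => A.1 ∪ φ.agents
  | .C A φ => A.1 ∪ φ.agents

end Closure

/-- The extended labeling `L⁺` of a CMAEM: `L⁺(s) = {φ | M,s ⊨ φ}`. -/
def extLabel {Agent AP : Type} (M : CMAEM Agent AP) (s : M.State) :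
    Set (Formula Agent AP) :=
  {φ | M.sat s φ}

/-!
Unravel the pseudo-model from the satisfying state `s` into paths
`s -B₁→ t₁ -B₂→ ⋯ -Bₙ→ tₙ` of `RD`-steps. Two paths are `{a}`-related when they coincide
after dropping their latest steps along coalitions containing `a`; taking `RD A` to be the
intersection of these relations over `a ∈ A` makes the unravelling a genuine CMAEM.
If two paths are related in this way for every `a ∈ A`, they even coincide after dropping their
latest steps along coalitions containing all of `A`: such a remainder, if nonempty, starts with
a step avoiding some `a ∈ A`, so it is also what remains after dropping for that `a`, hence a
suffix of the other remainder. The dropped steps are `RD A`-steps by monotonicity, so the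
endpoint map is a bounded morphism onto the pseudo-model and therefore preserves truth.
-/

theorem List.dropWhile_dropWhile_of_imp {α : Type*} {p q : α → Bool} (h : ∀ a, q a → p a)
    (l : List α) : (l.dropWhile q).dropWhile p = l.dropWhile p := by
  induction l with
  | nil => rfl
  | cons a l ih =>
    by_cases hq : q a
    · rw [List.dropWhile_cons_of_pos hq, ih, List.dropWhile_cons_of_pos (h a hq)]
    · rw [List.dropWhile_cons_of_neg hq]

namespace PseudoCMAEM

variable {Agent AP : Type}

structure BoundedMorphism (N M : PseudoCMAEM Agent AP) where
  toFun : N.State → M.State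
  label_eq : ∀ x, N.label x = M.label (toFun x)
  forth : ∀ {A x y}, N.RD A x y → M.RD A (toFun x) (toFun y)
  back : ∀ {A x t}, M.RD A (toFun x) t → ∃ y, N.RD A x y ∧ toFun y = t

namespace BoundedMorphism

variable {N M : PseudoCMAEM Agent AP} (f : BoundedMorphism N M)

theorem rc_forth {A : Coalition Agent} {x y : N.State} (h : N.RC A x y) :
    M.RC A (f.toFun x) (f.toFun y) :=
  Relation.ReflTransGen.lift f.toFun (fun _ _ ⟨B, hBA, hB⟩ => ⟨B, hBA, f.forth hB⟩) x y h

theorem rc_back {A : Coalition Agent} {x : N.State} {t : M.State}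
    (h : M.RC A (f.toFun x) t) : ∃ y, N.RC A x y ∧ f.toFun y = t := by
  induction h with
  | refl => exact ⟨x, .refl, rfl⟩
  | tail _ hstep ih =>
    obtain ⟨y, hxy, rfl⟩ := ih
    obtain ⟨B, hBA, hB⟩ := hstep
    obtain ⟨z, hyz, rfl⟩ := f.back hB
    exact ⟨z, hxy.tail ⟨B, hBA, hyz⟩, rfl⟩

theorem sat_iff (φ : Formula Agent AP) (x : N.State) : N.sat x φ ↔ M.sat (f.toFun x) φ := by
  induction φ generalizing x with
  | atom p => exact Set.ext_iff.mp (f.label_eq x) p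
  | neg φ ih => exact not_congr (ih x)
  | conj φ ψ ihφ ihψ => exact and_congr (ihφ x) (ihψ x)
  | D A φ ih =>
    refine ⟨fun h t ht => ?_, fun h y hxy => (ih y).mpr (h _ (f.forth hxy))⟩
    obtain ⟨y, hxy, rfl⟩ := f.back ht
    exact (ih y).mp (h y hxy)
  | C A φ ih =>
    refine ⟨fun h t ht => ?_, fun h y hxy => (ih y).mpr (h _ (f.rc_forth hxy))⟩
    obtain ⟨y, hxy, rfl⟩ := f.rc_back ht
    exact (ih y).mp (h y hxy)

end BoundedMorphism

end PseudoCMAEM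

namespace Unravel

section DropSuperset

variable {Agent α : Type} [DecidableEq Agent]

def dropSuperset (A : Finset Agent) (l : List (Coalition Agent × α)) :
    List (Coalition Agent × α) :=
  l.dropWhile fun e => A ⊆ e.1.1

theorem dropSuperset_cons_of_subset {A : Finset Agent} {B : Coalition Agent} (t : α)
    (l : List (Coalition Agent × α)) (h : A ⊆ B.1) :
    dropSuperset A ((B, t) :: l) = dropSuperset A l :=
  List.dropWhile_cons_of_pos (decide_eq_true h)

theorem dropSuperset_cons_of_not_subset {A : Finset Agent} {B : Coalition Agent} (t : α)
    (l : List (Coalition Agent × α)) (h : ¬ A ⊆ B.1) :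
    dropSuperset A ((B, t) :: l) = (B, t) :: l :=
  List.dropWhile_cons_of_neg (by simpa using h)

theorem dropSuperset_suffix (A : Finset Agent) (l : List (Coalition Agent × α)) :
    dropSuperset A l <:+ l :=
  List.dropWhile_suffix _

theorem dropSuperset_dropSuperset {A' A : Finset Agent} (h : A' ⊆ A)
    (l : List (Coalition Agent × α)) :
    dropSuperset A' (dropSuperset A l) = dropSuperset A' l :=
  List.dropWhile_dropWhile_of_imp (fun e he => by simpa using h.trans (by simpa using he)) l

theorem not_subset_of_dropSuperset_eq_cons {A : Finset Agent}
    {l l' : List (Coalition Agent × α)} {e : Coalition Agent × α}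
    (h : dropSuperset A l = e :: l') : ¬ A ⊆ e.1.1 := by
  have := List.head?_dropWhile_not (fun e => decide (A ⊆ e.1.1)) l
  rw [← dropSuperset, h] at this
  simpa using this

theorem dropSuperset_suffix_of_forall_singleton {A : Finset Agent}
    {x y : List (Coalition Agent × α)}
    (h : ∀ a ∈ A, dropSuperset {a} x = dropSuperset {a} y) :
    dropSuperset A x <:+ dropSuperset A y := by
  rcases hx : dropSuperset A x with _ | ⟨e, x'⟩
  · exact List.nil_suffix
  obtain ⟨a, ha, hae⟩ := Finset.not_subset.mp (not_subset_of_dropSuperset_eq_cons hx)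
  have hsingle : {a} ⊆ A := Finset.singleton_subset_iff.mpr ha
  calc e :: x' = dropSuperset {a} (dropSuperset A x) := by
          rw [hx, dropSuperset_cons_of_not_subset _ _ (by simpa using hae)]
    _ = dropSuperset {a} (dropSuperset A y) := by
          rw [dropSuperset_dropSuperset hsingle, h a ha, dropSuperset_dropSuperset hsingle]
    _ <:+ dropSuperset A y := dropSuperset_suffix _ _

theorem dropSuperset_eq_of_forall_singleton {A : Finset Agent}
    {x y : List (Coalition Agent × α)}
    (h : ∀ a ∈ A, dropSuperset {a} x = dropSuperset {a} y) :
    dropSuperset A x = dropSuperset A y :=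
  have hxy := dropSuperset_suffix_of_forall_singleton h
  have hyx := dropSuperset_suffix_of_forall_singleton fun a ha => (h a ha).symm
  hxy.eq_of_length (le_antisymm hxy.length_le hyx.length_le)

end DropSuperset

variable {Agent AP : Type} (M : PseudoCMAEM Agent AP) (s : M.State)

-- Paths are stored latest step first, so `dropSuperset` strips their latest steps.
def endpoint : List (Coalition Agent × M.State) → M.State
  | [] => s
  | (_, t) :: _ => t

inductive IsPath : List (Coalition Agent × M.State) → Prop
  | nil : IsPath []
  | cons {l : List (Coalition Agent × M.State)} {A : Coalition Agent} {t : M.State} :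
      IsPath l → M.RD A (endpoint M s l) t → IsPath ((A, t) :: l)

variable {M s} [DecidableEq Agent]

theorem IsPath.rd_endpoint_dropSuperset {l : List (Coalition Agent × M.State)}
    (hl : IsPath M s l) (A : Coalition Agent) :
    M.RD A (endpoint M s (dropSuperset A.1 l)) (endpoint M s l) := by
  induction hl with
  | nil => exact (M.equiv A).refl s
  | @cons l B t _ hstep ih =>
    by_cases hAB : A.1 ⊆ B.1
    · rw [dropSuperset_cons_of_subset t l hAB]
      exact (M.equiv A).trans ih (M.mono B A hAB _ _ hstep)
    · rw [dropSuperset_cons_of_not_subset t l hAB]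
      exact (M.equiv A).refl _

theorem rd_endpoint_of_dropSuperset_eq {A : Coalition Agent}
    {x y : List (Coalition Agent × M.State)} (hx : IsPath M s x) (hy : IsPath M s y)
    (h : dropSuperset A.1 x = dropSuperset A.1 y) : M.RD A (endpoint M s x) (endpoint M s y) :=
  (M.equiv A).trans ((M.equiv A).symm (hx.rd_endpoint_dropSuperset A))
    (h ▸ hy.rd_endpoint_dropSuperset A)

variable (M s)

def unravel : CMAEM Agent AP where
  State := {l // IsPath M s l}
  nonempty := ⟨⟨[], .nil⟩⟩
  RD A x y := ∀ a ∈ A.1, dropSuperset {a} x.1 = dropSuperset {a} y.1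
  equiv _ := ⟨fun _ _ _ => rfl, fun h a ha => (h a ha).symm,
    fun h₁ h₂ a ha => (h₁ a ha).trans (h₂ a ha)⟩
  mono _ _ hBA _ _ h a ha := h a (hBA ha)
  label x := M.label (endpoint M s x.1)
  inter A x y := by simp [single]

def unravelEndpoint : PseudoCMAEM.BoundedMorphism (unravel M s).toPseudoCMAEM M where
  toFun x := endpoint M s x.1
  label_eq _ := rfl
  forth {_ x y} h :=
    rd_endpoint_of_dropSuperset_eq x.2 y.2 (dropSuperset_eq_of_forall_singleton h)
  back {A x t} h := ⟨⟨(A, t) :: x.1, .cons x.2 h⟩,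
    fun _ ha => (dropSuperset_cons_of_subset t x.1 (Finset.singleton_subset_iff.mpr ha)).symm,
    rfl⟩

end Unravel

/-- if θ is satisfiable in a pseudo-CMAEM, then θ is satisfiable in a
CMAEM. -/
theorem statement9 {Agent AP : Type} [Fintype Agent] [Countable AP]
    (hcard : 1 < Fintype.card Agent)
    (θ : Formula Agent AP) (M : PseudoCMAEM Agent AP) (s : M.State) (hθ : M.sat s θ) :
    ∃ (M' : CMAEM Agent AP) (t : M'.State), M'.sat t θ := by
  classical
  exact ⟨Unravel.unravel M s, ⟨[], .nil⟩, ((Unravel.unravelEndpoint M s).sat_iff θ _).mpr hθ⟩
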